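/- arXiv:1204.3850 — 7 statements merged into one kernel-verified Lean document; each statement's English description precedes it below -/
import Mathlib

section
/- Let n ≥ 3 and let v, w : Fin n → E be two configurations of points in the Euclidean plane such that v is injective and there exist indices a, b, c for which v a, v b, v c are affinely independent. If all oriented angles agree, i.e. for all indices i, j, k one has ∡ (v j) (v i) (v k) = ∡ (w j) (w i) (w k), then there exists a real number r > 0 such that dist (w i) (w j) = r * dist (v i) (v j) for all i, j; that is, the configuration w is directly similar to v, so a planar point configuration with at least one affinely independent triple is determined up to similarity by its oriented angle measurements. -/
/-!
Two equal oriented angles make a non-degenerate triangle of `v` similar to the corresponding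
triangle of `w` (angle–angle criterion). Every pair of distinct points of `v` forms a
non-degenerate triangle with some vertex of the affinely independent triple `a b c`, so the scale
factor of the triangle `a b c` propagates to every pair.
-/

open EuclideanGeometry

noncomputable section

local notation "E" => EuclideanSpace ℝ (Fin 2)

instance : Fact (Module.finrank ℝ (EuclideanSpace ℝ (Fin 2)) = 2) :=
  ⟨finrank_euclideanSpace_fin⟩

instance : Module.Oriented ℝ (EuclideanSpace ℝ (Fin 2)) (Fin 2) :=
  ⟨(PiLp.basisFun 2 ℝ (Fin 2)).orientation⟩

open scoped Similar

section Collinear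

variable {k V P : Type*} [DivisionRing k] [AddCommGroup V] [Module k V] [AddTorsor V P]

theorem not_collinear_triple_of_not_collinear {p₁ p₂ p₃ x y : P}
    (h : ¬Collinear k {p₁, p₂, p₃}) (hxy : x ≠ y) :
    ¬Collinear k {x, y, p₁} ∨ ¬Collinear k {x, y, p₂} ∨ ¬Collinear k {x, y, p₃} := by
  contrapose! h
  obtain ⟨h₁, h₂, h₃⟩ := h
  have mem_line {p : P} (hp : Collinear k {x, y, p}) : p ∈ line[k, x, y] :=
    hp.mem_affineSpan_of_mem_of_ne (by simp) (by simp) (by simp) hxy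
  exact collinear_triple_of_mem_affineSpan_pair (mem_line h₁) (mem_line h₂) (mem_line h₃)

end Collinear

section Similar

variable {P₁ P₂ : Type*} [MetricSpace P₁] [PseudoMetricSpace P₂]

theorem Similar.dist_eq_mul_dist_of_dist_eq {a b c : P₁} {a' b' c' : P₂} {r : ℝ}
    (h : ![a', b', c'] ∼ ![a, b, c]) (hab : a ≠ b) (hr : dist a' b' = r * dist a b) :
    dist a' c' = r * dist a c ∧ dist b' c' = r * dist b c := by
  obtain ⟨s, -, hs⟩ := similar_iff_exists_pos_dist_eq.1 h
  have hsr : s = r :=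
    mul_right_cancel₀ (dist_ne_zero.2 hab) ((hs 0 1).symm.trans hr)
  subst hsr
  exact ⟨hs 0 2, hs 1 2⟩

variable {ι V : Type*} [AddCommGroup V] [Module ℝ V] [AddTorsor V P₁]

theorem similar_of_forall_similar_of_not_collinear {v : ι → P₁} {w : ι → P₂}
    (hv : Function.Injective v) {a b c : ι} (habc : ¬Collinear ℝ {v a, v b, v c})
    (htri : ∀ i j k, ¬Collinear ℝ {v i, v j, v k} → ![w i, w j, w k] ∼ ![v i, v j, v k]) :
    w ∼ v := by
  obtain ⟨r, hr, hd⟩ := similar_iff_exists_pos_dist_eq.1 (htri a b c habc)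
  refine similar_iff_exists_pos_dist_eq.2 ⟨r, hr, ?_⟩
  set B : Set ι := {a, b, c}
  have base : ∀ p ∈ B, ∀ q ∈ B, dist (w p) (w q) = r * dist (v p) (v q) := by
    simp only [B, Set.mem_insert_iff, Set.mem_singleton_iff]
    rintro p (rfl | rfl | rfl) q (rfl | rfl | rfl)
    exacts [hd 0 0, hd 0 1, hd 0 2, hd 1 0, hd 1 1, hd 1 2, hd 2 0, hd 2 1, hd 2 2]
  have pick : ∀ i j, i ≠ j → ∃ k ∈ B, ¬Collinear ℝ {v i, v j, v k} := by
    intro i j hij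
    rcases not_collinear_triple_of_not_collinear habc (hv.ne hij) with h | h | h
    exacts [⟨a, by simp [B], h⟩, ⟨b, by simp [B], h⟩, ⟨c, by simp [B], h⟩]
  have from_base : ∀ q ∈ B, ∀ i, dist (w q) (w i) = r * dist (v q) (v i) := by
    intro q hq i
    rcases eq_or_ne q i with rfl | hqi
    · simp
    obtain ⟨p, hp, hcol⟩ := pick q i hqi
    rw [Set.pair_comm] at hcol
    exact ((htri q p i hcol).dist_eq_mul_dist_of_dist_eq (ne₁₂_of_not_collinear hcol)
      (base q hq p hp)).1
  intro i j
  rcases eq_or_ne i j with rfl | hij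
  · simp
  obtain ⟨k, hk, hcol⟩ := pick i j hij
  rw [Set.pair_comm, Set.insert_comm] at hcol
  exact ((htri k i j hcol).dist_eq_mul_dist_of_dist_eq (ne₁₂_of_not_collinear hcol)
    (from_base k hk i)).2

end Similar

section Oriented

variable {V₁ V₂ P₁ P₂ : Type*}
  [NormedAddCommGroup V₁] [InnerProductSpace ℝ V₁] [MetricSpace P₁] [NormedAddTorsor V₁ P₁]
  [Fact (Module.finrank ℝ V₁ = 2)] [Module.Oriented ℝ V₁ (Fin 2)]
  [NormedAddCommGroup V₂] [InnerProductSpace ℝ V₂] [MetricSpace P₂] [NormedAddTorsor V₂ P₂]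
  [Fact (Module.finrank ℝ V₂ = 2)] [Module.Oriented ℝ V₂ (Fin 2)]

theorem angle_eq_of_oangle_eq_of_not_collinear {a b c : P₁} {a' b' c' : P₂}
    (h : ¬Collinear ℝ {a, b, c}) (h' : ∡ a b c = ∡ a' b' c') : ∠ a b c = ∠ a' b' c' := by
  have h'col : ¬Collinear ℝ {a', b', c'} := by
    rw [← oangle_ne_zero_and_ne_pi_iff_not_collinear, ← h']
    exact oangle_ne_zero_and_ne_pi_iff_not_collinear.2 h
  rw [angle_eq_abs_oangle_toReal (ne₁₂_of_not_collinear h) (ne₂₃_of_not_collinear h).symm,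
    angle_eq_abs_oangle_toReal (ne₁₂_of_not_collinear h'col) (ne₂₃_of_not_collinear h'col).symm,
    h']

theorem similar_of_oangle_eq_of_oangle_eq {a b c : P₁} {a' b' c' : P₂}
    (h : ¬Collinear ℝ {a, b, c}) (h₁ : ∡ a b c = ∡ a' b' c') (h₂ : ∡ b c a = ∡ b' c' a') :
    ![a, b, c] ∼ ![a', b', c'] := by
  have hbca : ¬Collinear ℝ {b, c, a} := by rwa [Set.insert_comm, Set.pair_comm] at h
  exact similar_of_angle_angle h (angle_eq_of_oangle_eq_of_not_collinear h h₁)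
    (angle_eq_of_oangle_eq_of_not_collinear hbca h₂)

end Oriented

theorem congruent_up_to_similarity_of_oangles_eq_general (n : ℕ)
    (v w : Fin n → E) (hv : Function.Injective v)
    (habc : ∃ a b c : Fin n, AffineIndependent ℝ ![v a, v b, v c])
    (hang : ∀ i j k : Fin n, ∡ (v j) (v i) (v k) = ∡ (w j) (w i) (w k)) :
    ∃ r : ℝ, 0 < r ∧ ∀ i j : Fin n, dist (w i) (w j) = r * dist (v i) (v j) := by
  obtain ⟨a, b, c, habc⟩ := habc
  rw [affineIndependent_iff_not_collinear_set] at habc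
  refine similar_iff_exists_pos_dist_eq.1 (similar_of_forall_similar_of_not_collinear hv habc ?_)
  exact fun i j k h => (similar_of_oangle_eq_of_oangle_eq h (hang j i k) (hang k j i)).symm

/-- A planar point configuration with at least one affinely independent triple is determined
up to similarity by its oriented angle measurements: if all oriented angles of `w` agree with
those of `v`, then `w` is obtained from `v` by scaling all distances by some factor `r > 0`. -/
theorem congruent_up_to_similarity_of_oangles_eq (n : ℕ) (hn : 3 ≤ n)
    (v w : Fin n → E) (hv : Function.Injective v)
    (habc : ∃ a b c : Fin n, AffineIndependent ℝ ![v a, v b, v c])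
    (hang : ∀ i j k : Fin n, ∡ (v j) (v i) (v k) = ∡ (w j) (w i) (w k)) :
    ∃ r : ℝ, 0 < r ∧ ∀ i j : Fin n, dist (w i) (w j) = r * dist (v i) (v j) :=
  congruent_up_to_similarity_of_oangles_eq_general n v w hv habc hang
end
end

section
/- Let A, B, C be affinely independent points of the Euclidean plane E and let X and Y be points in the topological interior of the convex hull of {A, B, C}. Then ∠ C A X + ∠ C B Y + ∠ A C B < π, i.e. the unsigned angle at A between C and X, plus the unsigned angle at B between C and Y, plus the unsigned angle of the triangle at C, is strictly less than π. -/
open EuclideanGeometry Real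

noncomputable section

local notation "E" => EuclideanSpace ℝ (Fin 2)

/-!
The ray from `A` through an interior point `X` meets the side `BC` strictly between `B` and `C`,
so it splits the angle at `A` into `∠ C A X + ∠ X A B`, and the second summand is positive
because `X` is off the line `AB`. Hence `∠ C A X < ∠ C A B`, likewise
`∠ C B Y < ∠ C B A`, and the angle sum of the triangle `ABC` finishes the proof.
-/

section

variable {V P : Type*} [NormedAddCommGroup V] [InnerProductSpace ℝ V] [MetricSpace P]
  [NormedAddTorsor V P]

open AffineMap in
theorem angle_add_angle_eq_of_vsub_eq_smul_add_smul {p b c x : P} (hbc : b ≠ c) {s t : ℝ}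
    (hs : 0 < s) (ht : 0 < t) (hx : x -ᵥ p = s • (b -ᵥ p) + t • (c -ᵥ p)) :
    ∠ c p x + ∠ x p b = ∠ c p b := by
  set q := lineMap c b (s / (s + t)) with hq_def
  have hq : Sbtw ℝ c q b :=
    sbtw_lineMap_iff.2
      ⟨hbc.symm, div_pos hs (by positivity), (div_lt_one (by positivity)).2 (by linarith)⟩
  have hxq : x -ᵥ p = (s + t) • (q -ᵥ p) := by
    rw [hx, hq_def, lineMap_apply, vadd_vsub_assoc, ← vsub_sub_vsub_cancel_right b c p, smul_add,
      smul_smul, mul_div_cancel₀ _ (by positivity : s + t ≠ 0)]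
    module
  rcases eq_or_ne x p with rfl | hxp
  · obtain rfl : q = x := by
      simpa [(by positivity : s + t ≠ 0)] using hxq.symm
    exact angle_add_angle_eq_of_sbtw hq
  · refine angle_add_angle_eq_of_sbtw_of_sameRay hq ?_ hxp
    rw [hxq]
    exact SameRay.sameRay_pos_smul_right _ (by positivity)

theorem AffineBasis.angle_lt_angle_of_forall_coord_pos (b : AffineBasis (Fin 3) ℝ P) {x : P}
    (hx : ∀ i, 0 < b.coord i x) : ∠ (b 2) (b 0) x < ∠ (b 2) (b 0) (b 1) := by
  have hx_eq : x -ᵥ b 0 = b.coord 1 x • (b 1 -ᵥ b 0) + b.coord 2 x • (b 2 -ᵥ b 0) := by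
    have hcomb := b.affineCombination_coord_eq_self x
    rw [Finset.affineCombination_eq_weightedVSubOfPoint_vadd_of_sum_eq_one _ _ _
      (b.sum_coord_apply_eq_one x) (b 0), Finset.weightedVSubOfPoint_apply, Fin.sum_univ_three,
      vsub_self, smul_zero, zero_add] at hcomb
    exact (eq_vadd_iff_vsub_eq _ _ _).1 hcomb.symm
  have hsplit := angle_add_angle_eq_of_vsub_eq_smul_add_smul (b.ind.injective.ne (by decide))
    (hx 1) (hx 2) hx_eq
  have hpos : ∠ x (b 0) (b 1) ≠ 0 := by
    rw [angle_comm, EuclideanGeometry.angle, ne_eq, InnerProductGeometry.angle_eq_zero_iff]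
    rintro ⟨-, r, -, hr⟩
    have hcoord := congrArg (b.coord 2).linear hr
    rw [map_smul, AffineMap.linearMap_vsub, AffineMap.linearMap_vsub,
      b.coord_apply_ne (by decide), b.coord_apply_ne (by decide)] at hcoord
    simp only [vsub_eq_sub, sub_self, sub_zero, smul_zero] at hcoord
    exact (hx 2).ne' hcoord
  linarith [(angle_nonneg x (b 0) (b 1)).lt_of_ne' hpos]

end

theorem angle_lt_angle_of_mem_interior_convexHull {V : Type*} [NormedAddCommGroup V]
    [InnerProductSpace ℝ V] [FiniteDimensional ℝ V] {A B C X : V}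
    (h : AffineIndependent ℝ ![A, B, C]) (hX : X ∈ interior (convexHull ℝ {A, B, C})) :
    ∠ C A X < ∠ C A B := by
  have hrange : Set.range ![A, B, C] = {A, B, C} := by
    ext; simp only [Matrix.range_cons, Matrix.range_empty, Set.union_empty, Set.mem_union,
      Set.mem_insert_iff, Set.mem_singleton_iff]
  let b : AffineBasis (Fin 3) ℝ V := ⟨![A, B, C], h, by
    rw [hrange, ← interior_convexHull_nonempty_iff_affineSpan_eq_top]; exact ⟨X, hX⟩⟩
  rw [← hrange] at hX
  change X ∈ interior (convexHull ℝ (Set.range b)) at hX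
  rw [b.interior_convexHull] at hX
  exact b.angle_lt_angle_of_forall_coord_pos hX

/-- If `X` and `Y` lie in the interior of the triangle `A B C`, then the angle at `A`
between `C` and `X`, plus the angle at `B` between `C` and `Y`, plus the angle of the
triangle at `C`, is strictly less than `π`. -/
theorem angle_sum_lt_pi_of_mem_interior_convexHull (A B C X Y : E)
    (h : AffineIndependent ℝ ![A, B, C])
    (hX : X ∈ interior (convexHull ℝ ({A, B, C} : Set E)))
    (hY : Y ∈ interior (convexHull ℝ ({A, B, C} : Set E))) :
    ∠ C A X + ∠ C B Y + ∠ A C B < π := by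
  have hBAC : AffineIndependent ℝ ![B, A, C] := by
    rwa [affineIndependent_iff_not_collinear_set, Set.insert_comm,
      ← affineIndependent_iff_not_collinear_set]
  have hA := angle_lt_angle_of_mem_interior_convexHull h hX
  have hB := angle_lt_angle_of_mem_interior_convexHull hBAC (by rwa [Set.insert_comm])
  have hAB : A ≠ B := h.injective.ne (by decide : (0 : Fin 3) ≠ 1)
  have hsum := angle_add_angle_add_angle_eq_pi C hAB
  linarith [angle_comm A B C, angle_comm B C A, angle_comm C A B, angle_comm A C B]
end
end

section
/- Let A, B, C be affinely independent points of the Euclidean plane E and let X be a point in the topological interior of the convex hull of {A, B, C}. Then ∠ B A X + ∠ X A C = ∠ B A C, i.e. the unsigned angle at A between B and C is the sum of the unsigned angles at A between B and X and between X and C. -/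
open EuclideanGeometry

noncomputable section

local notation "E" => EuclideanSpace ℝ (Fin 2)

private lemma angle_toReal_add {θ₁ θ₂ : Real.Angle}
    (h : |θ₁.toReal + θ₂.toReal - (θ₁ + θ₂).toReal| < 2 * Real.pi) :
    (θ₁ + θ₂).toReal = θ₁.toReal + θ₂.toReal := by
  have h2 : ((θ₁.toReal + θ₂.toReal : ℝ) : Real.Angle) = (((θ₁ + θ₂).toReal : ℝ) : Real.Angle) := by
    rw [Real.Angle.coe_add, Real.Angle.coe_toReal, Real.Angle.coe_toReal, Real.Angle.coe_toReal]
  obtain ⟨k, hk⟩ := Real.Angle.angle_eq_iff_two_pi_dvd_sub.mp h2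
  have hπ := Real.pi_pos
  have hk0 : k = 0 := by
    have h1 : |(k : ℝ)| < 1 := by
      rw [hk] at h
      rw [abs_mul, abs_mul, abs_of_pos (by norm_num : (0:ℝ) < 2), abs_of_pos hπ] at h
      nlinarith [abs_nonneg (k : ℝ)]
    have h2' : |k| < 1 := by exact_mod_cast (by push_cast; exact h1 : ((|k| : ℤ) : ℝ) < 1)
    have := abs_lt.mp h2'
    omega
  rw [hk0] at hk
  push_cast at hk
  linarith

private lemma angle_abs_add {θ₁ θ₂ : Real.Angle}
    (h1 : θ₁.sign = (θ₁ + θ₂).sign) (h2 : θ₂.sign = (θ₁ + θ₂).sign)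
    (h3 : (θ₁ + θ₂).sign ≠ 0) :
    |θ₁.toReal| + |θ₂.toReal| = |(θ₁ + θ₂).toReal| := by
  have hπ := Real.pi_pos
  have hle1 := θ₁.toReal_le_pi
  have hle2 := θ₂.toReal_le_pi
  have hle3 := (θ₁ + θ₂).toReal_le_pi
  have hgt1 := θ₁.neg_pi_lt_toReal
  have hgt2 := θ₂.neg_pi_lt_toReal
  have hgt3 := (θ₁ + θ₂).neg_pi_lt_toReal
  have hne1 : θ₁.toReal ≠ 0 := fun hz =>
    (Real.Angle.sign_ne_zero_iff.mp (h1 ▸ h3)).1 (Real.Angle.toReal_eq_zero_iff.mp hz)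
  have hne2 : θ₂.toReal ≠ 0 := fun hz =>
    (Real.Angle.sign_ne_zero_iff.mp (h2 ▸ h3)).1 (Real.Angle.toReal_eq_zero_iff.mp hz)
  have hne3 : (θ₁ + θ₂).toReal ≠ 0 := fun hz =>
    (Real.Angle.sign_ne_zero_iff.mp h3).1 (Real.Angle.toReal_eq_zero_iff.mp hz)
  rcases lt_trichotomy ((θ₁ + θ₂).toReal) 0 with hneg | hzero | hpos
  · -- all negative
    have hs3 : (θ₁ + θ₂).sign = -1 := Real.Angle.toReal_neg_iff_sign_neg.mp hneg
    have hn1 : θ₁.toReal < 0 := Real.Angle.toReal_neg_iff_sign_neg.mpr (h1.trans hs3)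
    have hn2 : θ₂.toReal < 0 := Real.Angle.toReal_neg_iff_sign_neg.mpr (h2.trans hs3)
    have ht : (θ₁ + θ₂).toReal = θ₁.toReal + θ₂.toReal := by
      apply angle_toReal_add
      rw [abs_lt]
      constructor <;> linarith
    rw [abs_of_neg hn1, abs_of_neg hn2, abs_of_neg hneg, ht]
    ring
  · exact absurd hzero hne3
  · -- all positive
    have hp1 : 0 < θ₁.toReal := by
      rcases hne1.lt_or_gt with hn | hp
      · have hs := Real.Angle.toReal_neg_iff_sign_neg.mp hn
        rw [h1] at hs
        exact absurd (Real.Angle.toReal_neg_iff_sign_neg.mpr hs) (not_lt.mpr hpos.le)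
      · exact hp
    have hp2 : 0 < θ₂.toReal := by
      rcases hne2.lt_or_gt with hn | hp
      · have hs := Real.Angle.toReal_neg_iff_sign_neg.mp hn
        rw [h2] at hs
        exact absurd (Real.Angle.toReal_neg_iff_sign_neg.mpr hs) (not_lt.mpr hpos.le)
      · exact hp
    have ht : (θ₁ + θ₂).toReal = θ₁.toReal + θ₂.toReal := by
      apply angle_toReal_add
      rw [abs_lt]
      constructor <;> linarith
    rw [abs_of_pos hp1, abs_of_pos hp2, abs_of_pos hpos, ht]

private lemma vec_angle_add {v w : E} (hli : LinearIndependent ℝ ![v, w]) {b c : ℝ}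
    (hb : 0 < b) (hc : 0 < c) :
    InnerProductGeometry.angle v (b • v + c • w) +
      InnerProductGeometry.angle (b • v + c • w) w = InnerProductGeometry.angle v w := by
  haveI : Fact (Module.finrank ℝ (EuclideanSpace ℝ (Fin 2)) = 2) :=
    ⟨finrank_euclideanSpace_fin⟩
  set o : Orientation ℝ (EuclideanSpace ℝ (Fin 2)) (Fin 2) :=
    (EuclideanSpace.basisFun (Fin 2) ℝ).toBasis.orientation with ho
  have hpair := LinearIndependent.pair_iff.mp hli
  have hv : v ≠ 0 := by
    intro hz
    obtain ⟨h1, -⟩ := hpair 1 0 (by simp [hz])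
    norm_num at h1
  have hw : w ≠ 0 := by
    intro hz
    obtain ⟨-, h2⟩ := hpair 0 1 (by simp [hz])
    norm_num at h2
  have hu : b • v + c • w ≠ 0 := by
    intro hz
    exact hb.ne' (hpair b c hz).1
  have hsign3 : (o.oangle v w).sign ≠ 0 := by
    rw [Real.Angle.sign_ne_zero_iff, ← not_or]
    rw [o.oangle_eq_zero_or_eq_pi_iff_not_linearIndependent]
    exact not_not.mpr hli
  have h1 : (o.oangle v (b • v + c • w)).sign = (o.oangle v w).sign := by
    rw [o.oangle_sign_smul_add_smul_right, sign_pos hc, one_mul]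
  have h2 : (o.oangle (b • v + c • w) w).sign = (o.oangle v w).sign := by
    rw [o.oangle_sign_smul_add_smul_left, sign_pos hb, one_mul]
  have hadd : o.oangle v (b • v + c • w) + o.oangle (b • v + c • w) w = o.oangle v w :=
    o.oangle_add hv hu hw
  rw [o.angle_eq_abs_oangle_toReal hv hu, o.angle_eq_abs_oangle_toReal hu hw,
    o.angle_eq_abs_oangle_toReal hv hw, ← hadd]
  exact angle_abs_add (by rw [hadd]; exact h1) (by rw [hadd]; exact h2) (by rw [hadd]; exact hsign3)

/-- If `X` lies in the interior of the triangle `A B C`, then the unsigned angle at `A`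
between `B` and `C` is the sum of the unsigned angles at `A` between `B` and `X` and
between `X` and `C`. -/
theorem angle_add_angle_eq_angle_of_mem_interior_convexHull (A B C X : E)
    (h : AffineIndependent ℝ ![A, B, C])
    (hX : X ∈ interior (convexHull ℝ ({A, B, C} : Set E))) :
    ∠ B A X + ∠ X A C = ∠ B A C := by
  have hrange : Set.range ![A, B, C] = ({A, B, C} : Set E) := by
    ext x
    simp [Matrix.range_cons, Matrix.range_empty]
    tauto
  have htop : affineSpan ℝ (Set.range ![A, B, C]) = ⊤ :=
    h.affineSpan_eq_top_iff_card_eq_finrank_add_one.mpr (by simp [finrank_euclideanSpace_fin])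
  let bb : AffineBasis (Fin 3) ℝ E := ⟨![A, B, C], h, htop⟩
  have hbb : Set.range (⇑bb) = ({A, B, C} : Set E) := hrange
  have hXmem : X ∈ interior (convexHull ℝ (Set.range (⇑bb))) := by rwa [hbb]
  rw [bb.interior_convexHull] at hXmem
  have hpos : ∀ i, 0 < bb.coord i X := hXmem
  -- express X -ᵥ A as a positive combination of B -ᵥ A and C -ᵥ A
  have hsum : ∑ i, bb.coord i X = 1 := bb.sum_coord_apply_eq_one X
  have hcomb : Finset.univ.affineCombination ℝ bb (fun i => bb.coord i X) = X :=
    bb.affineCombination_coord_eq_self X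
  have hXA : X -ᵥ A = (bb.coord 1 X) • (B -ᵥ A) + (bb.coord 2 X) • (C -ᵥ A) := by
    have := Finset.affineCombination_eq_weightedVSubOfPoint_vadd_of_sum_eq_one Finset.univ
      (fun i => bb.coord i X) (⇑bb) (by simpa using hsum) A
    rw [hcomb] at this
    conv_lhs => rw [this]
    rw [vadd_vsub, Finset.weightedVSubOfPoint_apply, Fin.sum_univ_three]
    have hb0 : bb 0 = A := rfl
    have hb1 : bb 1 = B := rfl
    have hb2 : bb 2 = C := rfl
    rw [hb0, hb1, hb2, vsub_self, smul_zero, zero_add]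
  have hli : LinearIndependent ℝ ![B -ᵥ A, C -ᵥ A] := by
    rw [LinearIndependent.pair_iff]
    intro s t hst
    rw [affineIndependent_iff_of_fintype] at h
    have hw : ∑ i, ![-s - t, s, t] i = 0 := by
      rw [Fin.sum_univ_three]
      simp
      ring
    have hvs : Finset.univ.weightedVSub ![A, B, C] ![-s - t, s, t] = 0 := by
      rw [Finset.weightedVSub_eq_weightedVSubOfPoint_of_sum_eq_zero _ _ _ hw A,
        Finset.weightedVSubOfPoint_apply, Fin.sum_univ_three]
      simp only [Matrix.cons_val_zero, Matrix.cons_val_one, Matrix.head_cons,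
        Matrix.cons_val_two, Matrix.tail_cons]
      rw [vsub_self, smul_zero, zero_add]
      exact hst
    have := h ![-s - t, s, t] hw hvs
    exact ⟨by simpa using this 1, by simpa using this 2⟩
  have e1 : ∠ B A X = InnerProductGeometry.angle (B -ᵥ A) (X -ᵥ A) := rfl
  have e2 : ∠ X A C = InnerProductGeometry.angle (X -ᵥ A) (C -ᵥ A) := rfl
  have e3 : ∠ B A C = InnerProductGeometry.angle (B -ᵥ A) (C -ᵥ A) := rfl
  rw [e1, e2, e3, hXA]
  exact vec_angle_add hli (hpos 1) (hpos 2)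
end
end

section
/- Let n be a positive natural number, C any type, and f : ZMod n → C a function satisfying the shift-compatibility condition: for all i, j : ZMod n, if f i = f j then f (i + 1) = f (j + 1). Then there exists a natural number d with d ∣ n and 0 < d such that: (a) for all i, j : ZMod n, f i = f j if and only if i − j lies in the additive subgroup of ZMod n generated by (d : ZMod n); (b) the range of f has exactly d elements; and (c) every nonempty fiber f ⁻¹' {c} (for c in the range of f) has exactly n / d elements. In particular, all equivalence classes (fibers of f) have equal size n / d. -/
/-- If `f : ZMod n → C` is shift-compatible (the value at `i + 1` is determined by the value
at `i`), then there is a positive divisor `d` of `n` such that two indices have the same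
`f`-value iff their difference is a multiple of `d`, the range of `f` has exactly `d`
elements, and every nonempty fiber of `f` has exactly `n / d` elements; in particular all
fibers of `f` have equal size. -/
theorem fibers_equal_size_of_shift_compatible (n : ℕ) (hn : 0 < n) (C : Type*)
    (f : ZMod n → C) (hf : ∀ i j : ZMod n, f i = f j → f (i + 1) = f (j + 1)) :
    ∃ d : ℕ, d ∣ n ∧ 0 < d ∧
      (∀ i j : ZMod n, f i = f j ↔ i - j ∈ AddSubgroup.zmultiples (d : ZMod n)) ∧
      Nat.card (Set.range f) = d ∧
      (∀ c ∈ Set.range f, Nat.card (f ⁻¹' {c}) = n / d) := by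
  haveI : NeZero n := ⟨hn.ne'⟩
  -- shifting by a natural number
  have shiftN : ∀ (m : ℕ) (i j : ZMod n), f i = f j → f (i + (m : ZMod n)) = f (j + (m : ZMod n)) := by
    intro m
    induction m with
    | zero => simpa using fun i j h => h
    | succ m ih =>
      intro i j h
      have := hf _ _ (ih i j h)
      push_cast
      rw [← add_assoc, ← add_assoc]
      exact this
  -- shifting by any element
  have shift : ∀ (t i j : ZMod n), f i = f j → f (i + t) = f (j + t) := by
    intro t i j h
    have := shiftN t.val i j h
    rwa [ZMod.natCast_rightInverse t] at this
  have shiftIff : ∀ (t i j : ZMod n), f i = f j ↔ f (i + t) = f (j + t) := by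
    intro t i j
    refine ⟨shift t i j, fun h => ?_⟩
    have := shift (-t) _ _ h
    simpa using this
  -- the subgroup of periods
  set H : AddSubgroup (ZMod n) :=
    { carrier := {k | f k = f 0}
      zero_mem' := rfl
      add_mem' := by
        intro a b ha hb
        have h1 := shift b a 0 ha
        rw [zero_add, hb] at h1
        exact h1
      neg_mem' := by
        intro a ha
        have := shift (-a) _ _ ha
        simpa using this.symm } with hH
  have memH : ∀ k : ZMod n, k ∈ H ↔ f k = f 0 := fun k => Iff.rfl
  have key : ∀ i j : ZMod n, f i = f j ↔ i - j ∈ H := by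
    intro i j
    rw [memH, show i - j = i + (-j) by ring, show (0 : ZMod n) = j + (-j) by ring]
    exact shiftIff (-j) i j
  -- classify H as zmultiples of a divisor d of n
  set K : AddSubgroup ℤ := AddSubgroup.comap (Int.castAddHom (ZMod n)) H with hK
  obtain ⟨a, ha⟩ := Int.subgroup_cyclic K
  have hKz : K = AddSubgroup.zmultiples a := by
    rw [ha, AddSubgroup.zmultiples_eq_closure]
  have hnK : (n : ℤ) ∈ K := by
    have h0 : ((n : ℤ) : ZMod n) = 0 := by push_cast; simp
    show ((n : ℤ) : ZMod n) ∈ H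
    rw [h0]
    exact H.zero_mem
  have hdvd : a ∣ (n : ℤ) := by
    rw [hKz] at hnK
    obtain ⟨k, hk⟩ := AddSubgroup.mem_zmultiples_iff.mp hnK
    exact ⟨k, by rw [← hk, smul_eq_mul, mul_comm]⟩
  set d : ℕ := a.natAbs with hd
  have hdn : d ∣ n := by
    have := Int.natAbs_dvd_natAbs.mpr hdvd
    simpa using this
  have hdpos : 0 < d := by
    rcases Nat.eq_zero_or_pos d with h0 | h
    · exfalso
      have : a = 0 := Int.natAbs_eq_zero.mp h0
      rw [this] at hdvd
      exact hn.ne' (by exact_mod_cast (zero_dvd_iff.mp hdvd))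
    · exact h
  -- H = zmultiples (d : ZMod n)
  have hKd : K = AddSubgroup.zmultiples (d : ℤ) := by
    rw [hKz]
    rcases Int.natAbs_eq a with h | h
    · rw [← h]
    · rw [show a = -(d : ℤ) from h, AddSubgroup.zmultiples_neg]
  have hHd : H = AddSubgroup.zmultiples ((d : ℕ) : ZMod n) := by
    have hsurj : Function.Surjective (Int.castAddHom (ZMod n)) := ZMod.intCast_surjective
    have := AddSubgroup.map_comap_eq_self_of_surjective hsurj H
    rw [← this, ← hK, hKd, AddMonoidHom.map_zmultiples]
    norm_num
  -- cardinality of H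
  have cardH : Nat.card H = n / d := by
    rw [hHd, Nat.card_zmultiples, ZMod.addOrderOf_coe d hn.ne', Nat.gcd_eq_right hdn]
  refine ⟨d, hdn, hdpos, fun i j => by rw [key i j, hHd], ?_, ?_⟩
  · -- card of range
    have hwd : ∀ (x y : ZMod n), (QuotientAddGroup.leftRel H).r x y →
        (⟨f x, x, rfl⟩ : Set.range f) = ⟨f y, y, rfl⟩ := by
      intro x y hxy
      have hxy' := QuotientAddGroup.leftRel_apply.mp hxy
      have : y - x ∈ H := by rwa [show y - x = -x + y by ring]
      exact Subtype.ext ((key y x).mpr this).symm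
    let F : (ZMod n ⧸ H) → Set.range f := Quotient.lift (fun i => ⟨f i, i, rfl⟩) hwd
    have hFbij : Function.Bijective F := by
      constructor
      · intro x y
        induction x using Quotient.ind
        induction y using Quotient.ind
        rename_i x y
        intro hxy
        have : f x = f y := congrArg Subtype.val hxy
        refine Quotient.sound (QuotientAddGroup.leftRel_apply.mpr ?_)
        rw [show -x + y = y - x by ring]
        exact (key y x).mp this.symm
      · rintro ⟨c, i, rfl⟩
        exact ⟨Quotient.mk _ i, rfl⟩
    have hcard : Nat.card (ZMod n ⧸ H) = Nat.card (Set.range f) :=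
      Nat.card_congr (Equiv.ofBijective F hFbij)
    have hmul : n = Nat.card (ZMod n ⧸ H) * (n / d) := by
      rw [← cardH, ← AddSubgroup.card_eq_card_quotient_mul_card_addSubgroup, Nat.card_zmod]
    rw [← hcard]
    have hnd : 0 < n / d := Nat.div_pos (Nat.le_of_dvd hn hdn) hdpos
    have h2 : n = d * (n / d) := (Nat.mul_div_cancel' hdn).symm
    exact Nat.eq_of_mul_eq_mul_right hnd (hmul.symm.trans h2)
  · -- fibers
    rintro c ⟨i, rfl⟩
    have e : (f ⁻¹' {f i}) ≃ H :=
      { toFun := fun j => ⟨j.1 - i, (key j.1 i).mp j.2⟩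
        invFun := fun h => ⟨h.1 + i, (key (h.1 + i) i).mpr (by simpa using h.2)⟩
        left_inv := fun j => Subtype.ext (by simp)
        right_inv := fun h => Subtype.ext (by simp) }
    rw [Nat.card_congr e, cardH]
end

section
/- Let σ be a type (the alphabet), V a finite type with Fintype.card V = n, and δ : V → σ → Option V a partial deterministic labeled graph. Let u, v : V. If for every word w : List σ with w.length ≤ n − 1 the word w is traversable from u if and only if it is traversable from v, then for every word w : List σ (of any length), w is traversable from u if and only if it is traversable from v. -/
/-- The state reached (if any) by following the word `w` from state `v` in the partial
deterministic labeled graph `δ`. -/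
def reach {V σ : Type*} (δ : V → σ → Option V) : V → List σ → Option V
  | v, [] => some v
  | v, a :: w => (δ v a).bind (fun u => reach δ u w)

/-! Let `a ≡ₖ b` mean that `a` and `b` agree on all words of length at most `k`. These
equivalence relations refine each other as `k` grows, and `≡ₖ₊₁` is computed from `≡ₖ`
through the one-letter transitions; so once the chain stalls it stays constant forever.
Each strict refinement splits a class, which can happen at most `n - 1` times, so the
chain stalls at some `k ≤ n - 1`. -/

open Function

namespace Setoid

variable {α : Type*} [Finite α]

theorem card_quotient_lt_of_lt {r s : Setoid α} (h : r < s) :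
    Nat.card (Quotient s) < Nat.card (Quotient r) := by
  have hsurj : Surjective (map_of_le h.le) := fun q => q.inductionOn fun a => ⟨⟦a⟧, rfl⟩
  refine (Nat.card_le_card_of_surjective _ hsurj).lt_of_ne fun heq => h.not_ge fun a b hab => ?_
  have hinj := (hsurj.bijective_of_nat_card_le heq.ge).injective
  exact Quotient.exact (hinj (a₁ := ⟦a⟧) (a₂ := ⟦b⟧) (Quotient.sound hab))

theorem exists_lt_card_succ_eq_of_antitone [Nonempty α] {r : ℕ → Setoid α} (hr : Antitone r) :
    ∃ k < Nat.card α, r (k + 1) = r k := by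
  by_contra! hne
  have hgrow : ∀ k ≤ Nat.card α, k + 1 ≤ Nat.card (Quotient (r k)) := by
    intro k hk
    induction k with
    | zero =>
      have : Nonempty (Quotient (r 0)) := .map Quotient.mk'' ‹_›
      exact Nat.card_pos
    | succ k ih =>
      have := card_quotient_lt_of_lt ((hr (Nat.le_add_right k 1)).lt_of_ne (hne k (by omega)))
      have := ih (by omega)
      omega
  exact (hgrow _ le_rfl).not_gt
    (Nat.lt_succ_of_le (Nat.card_le_card_of_surjective _ Quotient.mk_surjective))

end Setoid

section

variable {σ V : Type*} (δ : V → σ → Option V)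

def wordEquiv (k : ℕ) : Setoid V where
  r a b := ∀ w : List σ, w.length ≤ k → ((reach δ a w).isSome ↔ (reach δ b w).isSome)
  iseqv := ⟨fun _ _ _ => Iff.rfl, fun h w hw => (h w hw).symm,
    fun h₁ h₂ w hw => (h₁ w hw).trans (h₂ w hw)⟩

theorem wordEquiv_antitone : Antitone (wordEquiv δ) :=
  fun _ _ hkm _ _ h w hw => h w (hw.trans hkm)

theorem wordEquiv_succ_iff {k : ℕ} {a b : V} :
    wordEquiv δ (k + 1) a b ↔ ∀ s, Option.Rel (wordEquiv δ k) (δ a s) (δ b s) := by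
  constructor
  · intro h s
    have hs := h [s] (by simp)
    rcases ha : δ a s with _ | x <;> rcases hb : δ b s with _ | y
    · exact .none
    · simp [reach, ha, hb] at hs
    · simp [reach, ha, hb] at hs
    · exact .some fun w hw => by simpa [reach, ha, hb] using h (s :: w) (by simpa)
  · rintro hR (_ | ⟨s, w⟩) hw
    · rfl
    · have hs := hR s
      simp only [reach]
      generalize δ a s = x, δ b s = y at hs
      rcases hs with ⟨hxy⟩ | _
      · exact hxy w (Nat.le_of_succ_le_succ hw)
      · rfl

theorem wordEquiv_add_eq_of_succ_eq {k : ℕ} (h : wordEquiv δ (k + 1) = wordEquiv δ k) (m : ℕ) :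
    wordEquiv δ (k + m) = wordEquiv δ k := by
  induction m with
  | zero => rfl
  | succ m ih => ext a b; rw [← add_assoc, wordEquiv_succ_iff, ih, ← wordEquiv_succ_iff, h]

end

/-- If two states of a partial deterministic labeled graph on `n` states cannot be
distinguished by words of length at most `n - 1`, then they cannot be distinguished by
any word: the view of a vertex is already encoded in its subtree of depth `n - 1`. -/
theorem indistinguishable_of_short_words {σ V : Type*} [Fintype V] (n : ℕ)
    (hn : Fintype.card V = n) (δ : V → σ → Option V) (u v : V)
    (h : ∀ w : List σ, w.length ≤ n - 1 →
      ((reach δ u w).isSome ↔ (reach δ v w).isSome)) :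
    ∀ w : List σ, (reach δ u w).isSome ↔ (reach δ v w).isSome := by
  have : Nonempty V := ⟨u⟩
  obtain ⟨k, hk, hstable⟩ := Setoid.exists_lt_card_succ_eq_of_antitone (wordEquiv_antitone δ)
  have huv : wordEquiv δ k u v :=
    wordEquiv_antitone δ (by rw [Nat.card_eq_fintype_card] at hk; omega) h
  intro w
  rw [← wordEquiv_add_eq_of_succ_eq δ hstable w.length] at huv
  exact huv w (Nat.le_add_left _ _)
end

section
/- Let σ be a type (the alphabet), V a finite type, δ : V → σ → Option V a partial deterministic labeled graph, and v₀ : V a start state. Then there exist a finite type W with Fintype.card W ≤ Fintype.card V, a partial deterministic labeled graph δ' : W → σ → Option W, and a state w₀ : W such that: (i) w₀ (with respect to δ') and v₀ (with respect to δ) are indistinguishable, i.e. exactly the same words are traversable from them; and (ii) any two distinct states s ≠ t of W are distinguishable, i.e. there exists a word that is traversable (with respect to δ') from exactly one of s and t. -/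
/-- Transporting a graph along a function `f` with a compatibility map commutes with `reach`. -/
lemma reach_map {A B σ : Type*} (δ : A → σ → Option A) (δ' : B → σ → Option B)
    (f : A → B) (h : ∀ a x, δ' (f a) x = (δ a x).map f) :
    ∀ (w : List σ) (a : A), reach δ' (f a) w = (reach δ a w).map f := by
  intro w
  induction w with
  | nil => intro a; simp [reach]
  | cons x w ih =>
    intro a
    simp only [reach, h a x]
    cases δ a x with
    | none => simp
    | some u => simpa using ih u

/-- Existence of a minimum base graph: for every pointed partial deterministic labeled graph
`(V, δ, v₀)` there is a pointed graph `(W, δ', w₀)` of at most the same size whose start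
state is indistinguishable from `v₀` and whose states are pairwise distinguishable. -/
theorem exists_minimum_base_graph {σ V : Type*} [Fintype V]
    (δ : V → σ → Option V) (v₀ : V) :
    ∃ (W : Type) (instW : Fintype W) (δ' : W → σ → Option W) (w₀ : W),
      @Fintype.card W instW ≤ Fintype.card V ∧
      (∀ w : List σ, (reach δ' w₀ w).isSome ↔ (reach δ v₀ w).isSome) ∧
      (∀ s t : W, s ≠ t →
        ∃ w : List σ, ¬((reach δ' s w).isSome ↔ (reach δ' t w).isSome)) := by
  classical
  -- the indistinguishability setoid
  let s : Setoid V :=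
    ⟨fun v u => ∀ w : List σ, (reach δ v w).isSome ↔ (reach δ u w).isSome,
      ⟨fun _ _ => Iff.rfl, fun h w => (h w).symm, fun h h' w => (h w).trans (h' w)⟩⟩
  -- the quotient graph
  have key : ∀ (v u : V), s.r v u → ∀ x : σ,
      ((δ v x).map (Quotient.mk s)) = ((δ u x).map (Quotient.mk s)) := by
    intro v u h x
    have h1 := h [x]
    cases hv : δ v x with
    | none =>
      cases hu : δ u x with
      | none => rfl
      | some b => simp [reach, hv, hu] at h1
    | some a =>
      cases hu : δ u x with
      | none => simp [reach, hv, hu] at h1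
      | some b =>
        simp only [Option.map_some]
        congr 1
        apply Quotient.sound
        intro w
        have := h (x :: w)
        simpa [reach, hv, hu] using this
  let δq : Quotient s → σ → Option (Quotient s) :=
    Quotient.lift (fun v x => (δ v x).map (Quotient.mk s))
      (fun v u h => funext fun x => key v u h x)
  have hδq : ∀ (v : V) (x : σ), δq (Quotient.mk s v) x = (δ v x).map (Quotient.mk s) :=
    fun _ _ => rfl
  have hreachq : ∀ (w : List σ) (v : V),
      reach δq (Quotient.mk s v) w = (reach δ v w).map (Quotient.mk s) :=
    fun w v => reach_map δ δq (Quotient.mk s) hδq w v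
  haveI instQ : Fintype (Quotient s) :=
    Fintype.ofSurjective (Quotient.mk s) Quotient.exists_rep
  -- shrink to a Fin type
  let e : Quotient s ≃ Fin (Fintype.card (Quotient s)) := Fintype.equivFin _
  let δ' : Fin (Fintype.card (Quotient s)) → σ → Option (Fin (Fintype.card (Quotient s))) :=
    fun w x => (δq (e.symm w) x).map e
  have hδ' : ∀ (q : Quotient s) (x : σ), δ' (e q) x = (δq q x).map e := by
    intro q x; simp [δ']
  have hreach' : ∀ (w : List σ) (q : Quotient s),
      reach δ' (e q) w = (reach δq q w).map e :=
    fun w q => reach_map δq δ' e hδ' w q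
  refine ⟨Fin (Fintype.card (Quotient s)), inferInstance, δ', e (Quotient.mk s v₀), ?_, ?_, ?_⟩
  · simpa using Fintype.card_le_of_surjective (Quotient.mk s) Quotient.exists_rep
  · intro w
    rw [hreach' w, hreachq w]
    simp
  · intro a b hab
    have hq : e.symm a ≠ e.symm b := fun h => hab (by simpa using congrArg e h)
    obtain ⟨x, hx⟩ := Quotient.exists_rep (e.symm a)
    obtain ⟨y, hy⟩ := Quotient.exists_rep (e.symm b)
    have hxy : ¬ s.r x y := by
      intro h
      exact hq (by rw [← hx, ← hy]; exact Quotient.sound h)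
    have hxy' : ¬ ∀ w : List σ, (reach δ x w).isSome ↔ (reach δ y w).isSome := hxy
    rw [not_forall] at hxy'
    obtain ⟨w, hw⟩ := hxy' 
    refine ⟨w, ?_⟩
    have ha : reach δ' a w = (reach δ x w).map (e ∘ Quotient.mk s) := by
      have := hreach' w (e.symm a)
      rw [Equiv.apply_symm_apply] at this
      rw [this, ← hx, hreachq w, Option.map_map]
    have hb : reach δ' b w = (reach δ y w).map (e ∘ Quotient.mk s) := by
      have := hreach' w (e.symm b)
      rw [Equiv.apply_symm_apply] at this
      rw [this, ← hy, hreachq w, Option.map_map]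
    rw [ha, hb]
    simpa using hw
end

section
/- Let σ be a type (the alphabet). Let (W, δ', w₀) and (W', δ'', w₀') be two pointed partial deterministic labeled graphs over σ with W and W' finite, each satisfying: (i) every state is reachable from the start state, i.e. for every s : W there is a word w with reach δ' w₀ w = some s (and similarly for W'); and (ii) any two distinct states are distinguishable, i.e. for s ≠ t there is a word traversable from exactly one of them. If w₀ and w₀' are indistinguishable (exactly the same words are traversable from w₀ with respect to δ' as from w₀' with respect to δ''), then there is a bijection e : W ≃ W' with e w₀ = w₀' that commutes with the transitions: for every state s : W and letter a : σ, Option.map e (δ' s a) = δ'' (e s) a. In other words, the minimum base graph is unique up to isomorphism. -/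
/-!
Indistinguishability is a relation between the states of the two graphs. Reachability from
the indistinguishable start states makes it total on both sides, distinguishability makes
it functional and injective, so it is the graph of a bijection; and since indistinguishable
states have indistinguishable successors along every letter, that bijection commutes with
the transitions.
-/

open Relator

theorem Relator.exists_equiv_of_biTotal_of_biUnique {α β : Type*} {R : α → β → Prop}
    (htot : BiTotal R) (huniq : BiUnique R) : ∃ e : α ≃ β, ∀ a, R a (e a) := by
  choose f hf using htot.1
  refine ⟨Equiv.ofBijective f ⟨fun a a' h => huniq.1 (hf a) (h ▸ hf a'), fun b => ?_⟩, hf⟩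
  obtain ⟨a, ha⟩ := htot.2 b
  exact ⟨a, huniq.2 (hf a) ha⟩

theorem Option.map_eq_of_rel {α β : Type*} {R : α → β → Prop} {f : α → β}
    (hf : ∀ a b, R a b → f a = b) {x : Option α} {y : Option β} (h : Option.Rel R x y) :
    x.map f = y := by
  cases h with
  | some hab => exact congrArg some (hf _ _ hab)
  | none => rfl

section reach

variable {V V' σ : Type*}

theorem reach_append (δ : V → σ → Option V) (v : V) (u w : List σ) :
    reach δ v (u ++ w) = (reach δ v u).bind (fun s => reach δ s w) := by
  induction u generalizing v with
  | nil => rfl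
  | cons a u ih =>
    simp only [List.cons_append, reach]
    cases δ v a <;> simp [ih]

theorem reach_singleton (δ : V → σ → Option V) (v : V) (a : σ) :
    reach δ v [a] = δ v a := by
  simp [reach]

def Indist (δ : V → σ → Option V) (δ' : V' → σ → Option V') (s : V) (t : V') : Prop :=
  ∀ w : List σ, (reach δ s w).isSome ↔ (reach δ' t w).isSome

variable {δ : V → σ → Option V} {δ' : V' → σ → Option V'}

theorem Indist.symm {s : V} {t : V'} (h : Indist δ δ' s t) : Indist δ' δ t s :=
  fun w => (h w).symm

theorem Indist.trans {V'' : Type*} {δ'' : V'' → σ → Option V''} {s : V} {t : V'} {r : V''}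
    (h : Indist δ δ' s t) (h' : Indist δ' δ'' t r) : Indist δ δ'' s r :=
  fun w => (h w).trans (h' w)

theorem Indist.exists_reach_eq_some {s : V} {t : V'} (h : Indist δ δ' s t) {u : List σ}
    {p : V} (hp : reach δ s u = some p) :
    ∃ q, reach δ' t u = some q ∧ Indist δ δ' p q := by
  obtain ⟨q, hq⟩ := Option.isSome_iff_exists.mp ((h u).mp (by simp [hp]))
  refine ⟨q, hq, fun w => ?_⟩
  simpa [reach_append, hp, hq] using h (u ++ w)

theorem Indist.rel_step {s : V} {t : V'} (h : Indist δ δ' s t) (a : σ) :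
    Option.Rel (Indist δ δ') (δ s a) (δ' t a) := by
  cases hs : δ s a with
  | some p =>
    obtain ⟨q, hq, hpq⟩ := h.exists_reach_eq_some (u := [a]) (by rw [reach_singleton, hs])
    rw [reach_singleton] at hq
    exact hq ▸ Option.Rel.some hpq
  | none =>
    have ht : δ' t a = none := by
      simpa [reach_singleton, hs] using h [a]
    exact ht ▸ Option.Rel.none

theorem Indist.eq {s t : V}
    (hdist : ∀ s t : V, s ≠ t → ∃ w : List σ, ¬((reach δ s w).isSome ↔ (reach δ t w).isSome))
    (h : Indist δ δ s t) : s = t := by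
  by_contra hne
  obtain ⟨w, hw⟩ := hdist s t hne
  exact hw (h w)

theorem Indist.leftTotal {v₀ : V} {v₀' : V'} (h : Indist δ δ' v₀ v₀')
    (hreach : ∀ s : V, ∃ w : List σ, reach δ v₀ w = some s) : LeftTotal (Indist δ δ') :=
  fun s => by
    obtain ⟨w, hw⟩ := hreach s
    obtain ⟨t, -, hst⟩ := h.exists_reach_eq_some hw
    exact ⟨t, hst⟩

end reach

theorem minimum_base_graph_unique_general {σ W W' : Type*}
    (δ' : W → σ → Option W) (δ'' : W' → σ → Option W') (w₀ : W) (w₀' : W')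
    (hreach : ∀ s : W, ∃ w : List σ, reach δ' w₀ w = some s)
    (hreach' : ∀ s : W', ∃ w : List σ, reach δ'' w₀' w = some s)
    (hdist : ∀ s t : W, s ≠ t →
      ∃ w : List σ, ¬((reach δ' s w).isSome ↔ (reach δ' t w).isSome))
    (hdist' : ∀ s t : W', s ≠ t →
      ∃ w : List σ, ¬((reach δ'' s w).isSome ↔ (reach δ'' t w).isSome))
    (hind : ∀ w : List σ, (reach δ' w₀ w).isSome ↔ (reach δ'' w₀' w).isSome) :
    ∃ e : W ≃ W', e w₀ = w₀' ∧
      ∀ (s : W) (a : σ), Option.map e (δ' s a) = δ'' (e s) a := by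
  have htot : BiTotal (Indist δ' δ'') := by
    refine ⟨Indist.leftTotal hind hreach, fun t => ?_⟩
    obtain ⟨s, hts⟩ := Indist.leftTotal (Indist.symm hind) hreach' t
    exact ⟨s, hts.symm⟩
  have huniq : BiUnique (Indist δ' δ'') :=
    ⟨fun _ _ _ h h' => (h.trans h'.symm).eq hdist,
      fun _ _ _ h h' => (h.symm.trans h').eq hdist'⟩
  obtain ⟨e, he⟩ := exists_equiv_of_biTotal_of_biUnique htot huniq
  refine ⟨e, huniq.2 (he w₀) hind, fun s a => ?_⟩
  exact Option.map_eq_of_rel (fun p q hpq => huniq.2 (he p) hpq) ((he s).rel_step a)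

/-- Uniqueness of the minimum base graph up to isomorphism: two pointed partial
deterministic labeled graphs in which every state is reachable from the start state and
any two distinct states are distinguishable, and whose start states are indistinguishable,
are isomorphic via a bijection that maps start state to start state and commutes with the
transitions. -/
theorem minimum_base_graph_unique {σ W W' : Type*} [Fintype W] [Fintype W']
    (δ' : W → σ → Option W) (δ'' : W' → σ → Option W') (w₀ : W) (w₀' : W')
    (hreach : ∀ s : W, ∃ w : List σ, reach δ' w₀ w = some s)
    (hreach' : ∀ s : W', ∃ w : List σ, reach δ'' w₀' w = some s)
    (hdist : ∀ s t : W, s ≠ t →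
      ∃ w : List σ, ¬((reach δ' s w).isSome ↔ (reach δ' t w).isSome))
    (hdist' : ∀ s t : W', s ≠ t →
      ∃ w : List σ, ¬((reach δ'' s w).isSome ↔ (reach δ'' t w).isSome))
    (hind : ∀ w : List σ, (reach δ' w₀ w).isSome ↔ (reach δ'' w₀' w).isSome) :
    ∃ e : W ≃ W', e w₀ = w₀' ∧
      ∀ (s : W) (a : σ), Option.map e (δ' s a) = δ'' (e s) a :=
  minimum_base_graph_unique_general δ' δ'' w₀ w₀' hreach hreach' hdist hdist' hind
end
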